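/- (Bergman–Fuks formula K(p) = 1/I⁰(p), first identity of Theorem 4.4.) Let n ≥ 1, let Ω ⊆ ℂⁿ be a nonempty bounded open set, let w : ℂⁿ → [0,∞) be a measurable weight that is admissible on Ω with ∫_Ω w dλ < ∞, and let p ∈ Ω. Suppose K_p is a competitor satisfying the reproducing property: u(p) = ∫_Ω u(z)·conj(K_p(z))·w(z) dλ(z) for every competitor u. Then K_p(p) is a positive real number and I⁰_{Ω,w}(p) = 1/K_p(p). -/

import Mathlib

open MeasureTheory Complex
open scoped ENNReal NNReal

noncomputable section

/-- `ℂⁿ` as Euclidean space. -/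
abbrev Cn (n : ℕ) := EuclideanSpace ℂ (Fin n)

instance (n : ℕ) : MeasurableSpace (Cn n) :=
  MeasurableSpace.comap (WithLp.ofLp : Cn n → (Fin n → ℂ)) inferInstance

instance (n : ℕ) : MeasureSpace (Cn n) :=
  ⟨Measure.map (WithLp.toLp 2 : (Fin n → ℂ) → Cn n) volume⟩

/-- The squared weighted `L²` norm `‖u‖²_{Ω,w} = ∫_Ω |u|² w dλ`, valued in `[0,∞]`. -/
def wNormSq (n : ℕ) (Ω : Set (Cn n)) (w : Cn n → ℝ) (u : Cn n → ℂ) : ℝ≥0∞ :=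
  ∫⁻ z in Ω, ENNReal.ofReal (‖u z‖ ^ 2 * w z)

/-- A competitor: holomorphic on `Ω` with finite weighted squared norm. -/
def IsCompetitor (n : ℕ) (Ω : Set (Cn n)) (w : Cn n → ℝ) (u : Cn n → ℂ) : Prop :=
  DifferentiableOn ℂ u Ω ∧ wNormSq n Ω w u < ⊤

/-- Minimum integral `I⁰_{Ω,w}(p)`. -/
def I0 (n : ℕ) (Ω : Set (Cn n)) (w : Cn n → ℝ) (p : Cn n) : ℝ≥0∞ :=
  sInf {t | ∃ u, IsCompetitor n Ω w u ∧ u p = 1 ∧ t = wNormSq n Ω w u}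

/-- Minimum integral `I¹_{Ω,w}(p;X)`. -/
def I1 (n : ℕ) (Ω : Set (Cn n)) (w : Cn n → ℝ) (p : Cn n) (X : Cn n) : ℝ≥0∞ :=
  sInf {t | ∃ u, IsCompetitor n Ω w u ∧ u p = 0 ∧ fderiv ℂ u p X = 1 ∧
    t = wNormSq n Ω w u}

/-- Minimum integral `I¹_{Ω,w}(p;X|Y)`. -/
def I1cond (n : ℕ) (Ω : Set (Cn n)) (w : Cn n → ℝ) (p : Cn n) (X Y : Cn n) : ℝ≥0∞ :=
  sInf {t | ∃ u, IsCompetitor n Ω w u ∧ u p = 0 ∧ fderiv ℂ u p Y = 0 ∧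
    fderiv ℂ u p X = 1 ∧ t = wNormSq n Ω w u}

/-- Minimum integral `I¹_{Ω,w}(p;∂_k|_{<k})`. -/
def I1flag (n : ℕ) (Ω : Set (Cn n)) (w : Cn n → ℝ) (p : Cn n) (k : Fin n) : ℝ≥0∞ :=
  sInf {t | ∃ u, IsCompetitor n Ω w u ∧ u p = 0 ∧
    (∀ j : Fin n, j < k → fderiv ℂ u p (EuclideanSpace.single j (1 : ℂ)) = 0) ∧
    fderiv ℂ u p (EuclideanSpace.single k (1 : ℂ)) = 1 ∧ t = wNormSq n Ω w u}

/-- Minimum integral `I²_{Ω,w}(p;X,Y)`. -/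
def I2 (n : ℕ) (Ω : Set (Cn n)) (w : Cn n → ℝ) (p : Cn n) (X Y : Cn n) : ℝ≥0∞ :=
  sInf {t | ∃ u, IsCompetitor n Ω w u ∧ u p = 0 ∧ fderiv ℂ u p = 0 ∧
    fderiv ℂ (fun z => fderiv ℂ u z Y) p X = 1 ∧ t = wNormSq n Ω w u}

/-- Admissibility of a weight on `Ω`: a Cauchy-type estimate on compact subsets. -/
def Admissible (n : ℕ) (Ω : Set (Cn n)) (w : Cn n → ℝ) : Prop :=
  ∀ A : Set (Cn n), IsCompact A → A ⊆ Ω →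
    ∃ C > (0 : ℝ), ∀ u, IsCompetitor n Ω w u → ∀ z ∈ A,
      ‖u z‖ ≤ C * Real.sqrt ((wNormSq n Ω w u).toReal)

/-- The Hermitian inner product `⟨X,Y⟩ = Σ_j X_j conj(Y_j)`. -/
def herm (n : ℕ) (X Y : Cn n) : ℂ := ∑ j, X j * (starRingEnd ℂ) (Y j)

/-- The Kähler–Einstein weight of the ball of radius `r`. -/
def keWeight (n m : ℕ) (r : ℝ) (z : Cn n) : ℝ :=
  if ‖z‖ < r then
    ((n + 1 : ℝ) / r ^ 2) ^ (-(((m : ℤ) - 1) * (n : ℤ))) *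
      ((r ^ 2 - ‖z‖ ^ 2) / r ^ 2) ^ ((m - 1) * (n + 1))
  else 0

/-- The constant `C_m`. -/
def Cm (n m : ℕ) : ℝ :=
  Real.pi ^ n / (n + 1 : ℝ) ^ ((m - 1) * n) *
    (Nat.factorial ((m - 1) * (n + 1)) : ℝ) / (Nat.factorial (m * (n + 1) - 1) : ℝ)

end

section BergmanAux

instance (n : ℕ) : BorelSpace (Cn n) := ⟨(PiLp.borelSpace (p := 2) (X := fun _ : Fin n => ℂ)).measurable_eq⟩

lemma norm_term {n : ℕ} (w : Cn n → ℝ) (hw0 : ∀ z, 0 ≤ w z) (u v : Cn n → ℂ) (z : Cn n) :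
    ‖u z * (starRingEnd ℂ) (v z) * (w z : ℂ)‖ = ‖u z‖ * ‖v z‖ * w z := by
  rw [norm_mul, norm_mul, RCLike.norm_conj, Complex.norm_real, Real.norm_of_nonneg (hw0 z)]

section Aux
variable {n : ℕ} {Ω : Set (Cn n)} {w : Cn n → ℝ}

lemma wNormSq_const_mul (c : ℂ) (u : Cn n → ℂ) :
    wNormSq n Ω w (fun z => c * u z) = ENNReal.ofReal (‖c‖ ^ 2) * wNormSq n Ω w u := by
  unfold wNormSq
  rw [← lintegral_const_mul' _ _ ENNReal.ofReal_ne_top]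
  refine lintegral_congr fun z => ?_
  rw [← ENNReal.ofReal_mul (by positivity)]
  congr 1
  rw [norm_mul]; ring

lemma cs_bound (hΩo : IsOpen Ω) (hw0 : ∀ z, 0 ≤ w z) (hwm : Measurable w)
    {u v : Cn n → ℂ} (hu : IsCompetitor n Ω w u) (hv : IsCompetitor n Ω w v) :
    ‖∫ z in Ω, u z * (starRingEnd ℂ) (v z) * (w z : ℂ)‖ ≤
      Real.sqrt ((wNormSq n Ω w u).toReal) * Real.sqrt ((wNormSq n Ω w v).toReal) := by
  have hum : AEStronglyMeasurable u (volume.restrict Ω) :=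
    (hu.1.continuousOn).aestronglyMeasurable hΩo.measurableSet
  have hvm : AEStronglyMeasurable v (volume.restrict Ω) :=
    (hv.1.continuousOn).aestronglyMeasurable hΩo.measurableSet
  have step1 : ‖∫ z in Ω, u z * (starRingEnd ℂ) (v z) * (w z : ℂ)‖ ≤
      ∫ z in Ω, ‖u z‖ * ‖v z‖ * w z := by
    refine (norm_integral_le_integral_norm _).trans_eq ?_
    exact integral_congr_ae (Filter.Eventually.of_forall fun z => norm_term w hw0 u v z)
  have hFm : AEStronglyMeasurable (fun z => ‖u z‖ * ‖v z‖ * w z) (volume.restrict Ω) :=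
    (hum.norm.mul hvm.norm).mul (hwm.aestronglyMeasurable.restrict)
  have step2 : ∫ z in Ω, ‖u z‖ * ‖v z‖ * w z =
      (∫⁻ z in Ω, ENNReal.ofReal (‖u z‖ * ‖v z‖ * w z)).toReal :=
    integral_eq_lintegral_of_nonneg_ae
      (Filter.Eventually.of_forall fun z =>
        mul_nonneg (mul_nonneg (norm_nonneg _) (norm_nonneg _)) (hw0 z)) hFm
  set f : Cn n → ℝ≥0∞ := fun z => ENNReal.ofReal (‖u z‖ * Real.sqrt (w z)) with hf
  set g : Cn n → ℝ≥0∞ := fun z => ENNReal.ofReal (‖v z‖ * Real.sqrt (w z)) with hg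
  have hfm : AEMeasurable f (volume.restrict Ω) :=
    (hum.norm.aemeasurable.mul (hwm.sqrt.aemeasurable.restrict)).ennreal_ofReal
  have hgm : AEMeasurable g (volume.restrict Ω) :=
    (hvm.norm.aemeasurable.mul (hwm.sqrt.aemeasurable.restrict)).ennreal_ofReal
  have hconj : (2 : ℝ).HolderConjugate 2 := Real.HolderConjugate.two_two
  have hsq : ∀ (h : Cn n → ℂ), ∀ z, (ENNReal.ofReal (‖h z‖ * Real.sqrt (w z))) ^ (2 : ℝ) =
      ENNReal.ofReal (‖h z‖ ^ 2 * w z) := by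
    intro h z
    rw [ENNReal.ofReal_rpow_of_nonneg (by positivity) (by norm_num : (0:ℝ) ≤ 2)]
    congr 1
    rw [show ((‖h z‖ * Real.sqrt (w z)) ^ (2:ℝ)) = (‖h z‖ * Real.sqrt (w z)) ^ (2:ℕ) by
      rw [← Real.rpow_natCast]; norm_num]
    rw [mul_pow, Real.sq_sqrt (hw0 z)]
  have step3 : (∫⁻ z in Ω, ENNReal.ofReal (‖u z‖ * ‖v z‖ * w z)) ≤
      (wNormSq n Ω w u) ^ (1/2 : ℝ) * (wNormSq n Ω w v) ^ (1/2 : ℝ) := by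
    have hh := ENNReal.lintegral_mul_le_Lp_mul_Lq (volume.restrict Ω) hconj hfm hgm
    have hpt : ∀ z, ENNReal.ofReal (‖u z‖ * ‖v z‖ * w z) = (f * g) z := by
      intro z
      simp only [Pi.mul_apply, hf, hg]
      rw [← ENNReal.ofReal_mul (by positivity)]
      congr 1
      rw [show ‖u z‖ * Real.sqrt (w z) * (‖v z‖ * Real.sqrt (w z))
          = ‖u z‖ * ‖v z‖ * (Real.sqrt (w z) * Real.sqrt (w z)) by ring,
        Real.mul_self_sqrt (hw0 z)]
    calc (∫⁻ z in Ω, ENNReal.ofReal (‖u z‖ * ‖v z‖ * w z))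
        = ∫⁻ z in Ω, (f * g) z := lintegral_congr hpt
      _ ≤ (∫⁻ z in Ω, f z ^ (2:ℝ)) ^ (1/2:ℝ) * (∫⁻ z in Ω, g z ^ (2:ℝ)) ^ (1/2:ℝ) := hh
      _ = (wNormSq n Ω w u) ^ (1/2 : ℝ) * (wNormSq n Ω w v) ^ (1/2 : ℝ) := by
          unfold wNormSq
          rw [lintegral_congr (hsq u), lintegral_congr (hsq v)]
  have hfin : (wNormSq n Ω w u) ^ (1/2 : ℝ) * (wNormSq n Ω w v) ^ (1/2 : ℝ) ≠ ⊤ :=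
    ENNReal.mul_ne_top (ENNReal.rpow_ne_top_of_nonneg (by norm_num) hu.2.ne)
      (ENNReal.rpow_ne_top_of_nonneg (by norm_num) hv.2.ne)
  calc ‖∫ z in Ω, u z * (starRingEnd ℂ) (v z) * (w z : ℂ)‖
      ≤ ∫ z in Ω, ‖u z‖ * ‖v z‖ * w z := step1
    _ = (∫⁻ z in Ω, ENNReal.ofReal (‖u z‖ * ‖v z‖ * w z)).toReal := step2
    _ ≤ ((wNormSq n Ω w u) ^ (1/2 : ℝ) * (wNormSq n Ω w v) ^ (1/2 : ℝ)).toReal :=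
        ENNReal.toReal_mono hfin step3
    _ = Real.sqrt ((wNormSq n Ω w u).toReal) * Real.sqrt ((wNormSq n Ω w v).toReal) := by
        rw [ENNReal.toReal_mul, Real.sqrt_eq_rpow, Real.sqrt_eq_rpow,
          ENNReal.toReal_rpow, ENNReal.toReal_rpow]
end Aux

end BergmanAux

/-- Bergman–Fuks formula `K(p) = 1/I⁰(p)` (first identity of Theorem 4.4). -/
theorem I0_eq_inv_kernel {n : ℕ} (hn : 1 ≤ n)
    (Ω : Set (Cn n)) (hΩo : IsOpen Ω) (hne : Ω.Nonempty) (hbd : Bornology.IsBounded Ω)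
    (w : Cn n → ℝ) (hwm : Measurable w) (hw0 : ∀ z, 0 ≤ w z)
    (hadm : Admissible n Ω w)
    (hwint : (∫⁻ z in Ω, ENNReal.ofReal (w z)) < ⊤)
    (p : Cn n) (hp : p ∈ Ω)
    (Kp : Cn n → ℂ) (hKp : IsCompetitor n Ω w Kp)
    (hrep : ∀ u, IsCompetitor n Ω w u →
      u p = ∫ z in Ω, u z * (starRingEnd ℂ) (Kp z) * (w z : ℂ)) :
    0 < (Kp p).re ∧ (Kp p).im = 0 ∧
      I0 n Ω w p = ENNReal.ofReal (1 / (Kp p).re) := by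
  have hKm : AEStronglyMeasurable Kp (volume.restrict Ω) :=
    (hKp.1.continuousOn).aestronglyMeasurable hΩo.measurableSet
  set B : ℝ := (wNormSq n Ω w Kp).toReal with hB
  have hB0 : 0 ≤ B := ENNReal.toReal_nonneg
  have hreal : ∫ z in Ω, ‖Kp z‖ ^ 2 * w z = B := by
    rw [hB]
    unfold wNormSq
    exact integral_eq_lintegral_of_nonneg_ae
      (Filter.Eventually.of_forall fun z => mul_nonneg (by positivity) (hw0 z))
      (((hKm.norm.aemeasurable.pow_const 2).mul (hwm.aemeasurable.restrict)).aestronglyMeasurable)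
  have hKpB : Kp p = (B : ℂ) := by
    calc Kp p = ∫ z in Ω, Kp z * (starRingEnd ℂ) (Kp z) * (w z : ℂ) := hrep Kp hKp
      _ = ∫ z in Ω, ((‖Kp z‖ ^ 2 * w z : ℝ) : ℂ) := by
          refine integral_congr_ae (Filter.Eventually.of_forall fun z => ?_)
          show Kp z * (starRingEnd ℂ) (Kp z) * (w z : ℂ) = ((‖Kp z‖ ^ 2 * w z : ℝ) : ℂ)
          rw [Complex.mul_conj, Complex.ofReal_mul]
          congr 1
          norm_cast
          rw [← Complex.sq_norm]
      _ = ((∫ z in Ω, ‖Kp z‖ ^ 2 * w z : ℝ) : ℂ) := integral_ofReal (f := fun z => ‖Kp z‖ ^ 2 * w z)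
      _ = (B : ℂ) := by rw [hreal]
  have him : (Kp p).im = 0 := by rw [hKpB]; simp
  have hre : (Kp p).re = B := by rw [hKpB]; simp
  -- constant competitor
  have hwn1 : wNormSq n Ω w (fun _ => (1 : ℂ)) = ∫⁻ z in Ω, ENNReal.ofReal (w z) := by
    unfold wNormSq; simp
  have hu1 : IsCompetitor n Ω w (fun _ => (1 : ℂ)) :=
    ⟨differentiableOn_const 1, by rw [hwn1]; exact hwint⟩
  have hBpos : 0 < B := by
    rcases lt_or_eq_of_le hB0 with h | h
    · exact h
    · exfalso
      have hcs1 := cs_bound hΩo hw0 hwm hu1 hKp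
      rw [← hrep _ hu1] at hcs1
      simp only [norm_one, ← hB, ← h, Real.sqrt_zero, mul_zero] at hcs1
      linarith
  have hBne : B ≠ 0 := hBpos.ne'
  refine ⟨by rw [hre]; exact hBpos, him, ?_⟩
  rw [hre]
  unfold I0
  refine le_antisymm ?_ ?_
  · -- upper bound via u₀ = B⁻¹ • Kp
    have hval : ((B : ℂ)⁻¹ * Kp p) = 1 := by
      rw [hKpB, inv_mul_cancel₀ (by exact_mod_cast hBne)]
    have hwn0 : wNormSq n Ω w (fun z => (B : ℂ)⁻¹ * Kp z) = ENNReal.ofReal (1 / B) := by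
      rw [wNormSq_const_mul]
      rw [show wNormSq n Ω w Kp = ENNReal.ofReal B from (ENNReal.ofReal_toReal hKp.2.ne).symm]
      rw [← ENNReal.ofReal_mul (by positivity)]
      congr 1
      rw [norm_inv, Complex.norm_real, Real.norm_of_nonneg hB0]
      field_simp
    have hcomp : IsCompetitor n Ω w (fun z => (B : ℂ)⁻¹ * Kp z) :=
      ⟨hKp.1.const_mul _, by rw [hwn0]; exact ENNReal.ofReal_lt_top⟩
    exact sInf_le ⟨_, hcomp, hval, hwn0.symm⟩
  · refine le_sInf ?_
    rintro t ⟨u, hu, hup, rfl⟩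
    have hcs := cs_bound hΩo hw0 hwm hu hKp
    rw [← hrep u hu, hup] at hcs
    rw [norm_one] at hcs
    set a : ℝ := (wNormSq n Ω w u).toReal with ha
    have ha0 : 0 ≤ a := ENNReal.toReal_nonneg
    have h1 : 1 ≤ a * B := by
      nlinarith [Real.sq_sqrt ha0, Real.sq_sqrt hB0, Real.sqrt_nonneg a, Real.sqrt_nonneg B]
    have h2 : 1 / B ≤ a := by rw [div_le_iff₀ hBpos]; exact h1
    calc ENNReal.ofReal (1 / B) ≤ ENNReal.ofReal a := ENNReal.ofReal_le_ofReal h2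
      _ = wNormSq n Ω w u := ENNReal.ofReal_toReal hu.2.ne
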